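/- Consider a population partitioned into C clusters, where cluster i contains n_i individuals all having utility u_i and healthy-probability q_i. Let t* be an optimal single pooled test, intersecting cluster i in a_i individuals. If B·a_i ≤ n_i for all clusters i, then the regime consisting of B pairwise disjoint copies of t* (same cluster composition) is an optimal testing regime with budget B, even among overlapping regimes. -/

import Mathlib

/-!
Individual `i` is cleared by some negative test, so by the union bound its clearing
probability is at most the expected number of negative tests containing it; this makes the
welfare of any regime at most the sum of the stand-alone welfares of its tests, hence at most
`B` times that of `tstar`. Disjoint tests clear each individual at most once, so for them the
bound is an equality, and a disjoint copy of `tstar` with the same cluster composition has the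
same stand-alone welfare because `q` and `u` are constant on clusters.
-/

open Finset

/-- Probability of a health realization `ω` (true = healthy) under independent
healthy-probabilities `q`. -/
noncomputable def healthProb {n : ℕ} (q : Fin n → ℝ) (ω : Fin n → Bool) : ℝ :=
  ∏ i, if ω i then q i else 1 - q i

/-- Probability that individual `i` lies in at least one negative test of the regime `T`. -/
noncomputable def inNegProb {n B : ℕ} (q : Fin n → ℝ) (T : Fin B → Finset (Fin n))
    (i : Fin n) : ℝ :=
  ∑ ω : Fin n → Bool,
    if ∃ j, i ∈ T j ∧ ∀ k ∈ T j, ω k = true then healthProb q ω else 0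

/-- Expected welfare of a (possibly overlapping) testing regime `T`. -/
noncomputable def welfare {n B : ℕ} (q u : Fin n → ℝ) (T : Fin B → Finset (Fin n)) : ℝ :=
  ∑ i, u i * inNegProb q T i

/-- Stand-alone expected welfare of a single pooled test `t`. -/
noncomputable def testWelfare {n : ℕ} (q u : Fin n → ℝ) (t : Finset (Fin n)) : ℝ :=
  (∏ i ∈ t, q i) * ∑ i ∈ t, u i

/-- Welfare of a non-overlapping testing regime, as a sum of stand-alone test welfares. -/
noncomputable def noWelfare {n B : ℕ} (q u : Fin n → ℝ) (T : Fin B → Finset (Fin n)) : ℝ :=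
  ∑ j, testWelfare q u (T j)

/-- Probability that test `T j` is pivotal for individual `i`: `i ∈ T j`, test `T j` is
negative, and every earlier test containing `i` is positive. -/
noncomputable def pivotalProb {n B : ℕ} (q : Fin n → ℝ) (T : Fin B → Finset (Fin n))
    (i : Fin n) (j : Fin B) : ℝ :=
  ∑ ω : Fin n → Bool,
    if i ∈ T j ∧ (∀ k ∈ T j, ω k = true) ∧
        (∀ j' : Fin B, j' < j → i ∈ T j' → ∃ k ∈ T j', ω k = false)
      then healthProb q ω else 0

lemma healthProb_nonneg {n : ℕ} {q : Fin n → ℝ} (hq : ∀ i, 0 ≤ q i ∧ q i ≤ 1)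
    (ω : Fin n → Bool) : 0 ≤ healthProb q ω :=
  prod_nonneg fun i _ => by
    obtain ⟨h0, h1⟩ := hq i
    split <;> linarith

/-- The sum factorizes over coordinates: one in `t` contributes `q k`, any other one
`q k + (1 - q k) = 1`. -/
lemma sum_healthProb_of_forall_mem_true {n : ℕ} (q : Fin n → ℝ) (t : Finset (Fin n)) :
    (∑ ω : Fin n → Bool, if ∀ k ∈ t, ω k = true then healthProb q ω else 0) =
      ∏ k ∈ t, q k := by
  set g : Fin n → Bool → ℝ := fun i b => if b then q i else if i ∈ t then 0 else 1 - q i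
  have hsummand : ∀ ω : Fin n → Bool,
      (if ∀ k ∈ t, ω k = true then healthProb q ω else 0) = ∏ i, g i (ω i) := by
    intro ω
    split_ifs with hω
    · refine prod_congr rfl fun i _ => ?_
      by_cases hi : i ∈ t <;> simp [g, hi, hω]
    · push Not at hω
      obtain ⟨k, hk, hωk⟩ := hω
      exact (prod_eq_zero (mem_univ k) (by simp [g, hk, hωk])).symm
  have hcoord : ∀ i, ∑ b, g i b = if i ∈ t then q i else 1 := by
    intro i
    by_cases hi : i ∈ t <;> simp [g, hi]
  simp_rw [hsummand, ← Fintype.prod_sum, hcoord, prod_ite_mem, univ_inter]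

open Function

lemma ite_exists_le_sum {ι M : Type*} [Fintype ι] [AddCommMonoid M] [PartialOrder M]
    [IsOrderedAddMonoid M] (P : ι → Prop) [DecidablePred P] [Decidable (∃ j, P j)] {w : M}
    (hw : 0 ≤ w) : (if ∃ j, P j then w else 0) ≤ ∑ j, if P j then w else 0 := by
  have hterm : ∀ j, 0 ≤ if P j then w else 0 := fun j => by split_ifs <;> simp [hw]
  split_ifs with h
  · obtain ⟨j, hj⟩ := h
    simpa [hj] using single_le_sum (fun j _ => hterm j) (mem_univ j)
  · exact sum_nonneg fun j _ => hterm j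

lemma ite_exists_eq_sum {ι M : Type*} [Fintype ι] [AddCommMonoid M]
    (P : ι → Prop) [DecidablePred P] [Decidable (∃ j, P j)] (w : M)
    (hP : ∀ j j', P j → P j' → j = j') :
    (if ∃ j, P j then w else 0) = ∑ j, if P j then w else 0 := by
  split_ifs with h
  · obtain ⟨j, hj⟩ := h
    rw [sum_eq_single j (fun j' _ hj' => if_neg fun h' => hj' (hP j' j h' hj)) (by simp),
      if_pos hj]
  · push Not at h
    simp [h]

noncomputable def expectedNegTests {n B : ℕ} (q : Fin n → ℝ) (T : Fin B → Finset (Fin n))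
    (i : Fin n) : ℝ :=
  ∑ j, if i ∈ T j then ∏ k ∈ T j, q k else 0

lemma expectedNegTests_eq_sum_healthProb {n B : ℕ} (q : Fin n → ℝ)
    (T : Fin B → Finset (Fin n)) (i : Fin n) :
    expectedNegTests q T i = ∑ ω : Fin n → Bool, ∑ j,
      if i ∈ T j ∧ ∀ k ∈ T j, ω k = true then healthProb q ω else 0 := by
  rw [expectedNegTests, sum_comm]
  refine sum_congr rfl fun j _ => ?_
  by_cases hij : i ∈ T j <;> simp [hij, sum_healthProb_of_forall_mem_true]

lemma inNegProb_le_expectedNegTests {n B : ℕ} {q : Fin n → ℝ}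
    (hq : ∀ i, 0 ≤ q i ∧ q i ≤ 1) (T : Fin B → Finset (Fin n)) (i : Fin n) :
    inNegProb q T i ≤ expectedNegTests q T i := by
  rw [expectedNegTests_eq_sum_healthProb]
  exact sum_le_sum fun ω _ => ite_exists_le_sum _ (healthProb_nonneg hq ω)

lemma inNegProb_eq_expectedNegTests {n B : ℕ} (q : Fin n → ℝ) {T : Fin B → Finset (Fin n)}
    (hT : Pairwise (Disjoint on T)) (i : Fin n) :
    inNegProb q T i = expectedNegTests q T i := by
  rw [expectedNegTests_eq_sum_healthProb]
  refine sum_congr rfl fun ω _ => ite_exists_eq_sum _ _ fun j j' hj hj' => ?_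
  by_contra hne
  exact disjoint_left.mp (hT hne) hj.1 hj'.1

lemma sum_mul_expectedNegTests {n B : ℕ} (q u : Fin n → ℝ) (T : Fin B → Finset (Fin n)) :
    ∑ i, u i * expectedNegTests q T i = noWelfare q u T := by
  simp_rw [expectedNegTests, mul_sum, mul_ite, mul_zero]
  rw [sum_comm]
  refine sum_congr rfl fun j _ => ?_
  rw [sum_ite_mem, univ_inter, testWelfare, mul_sum]
  exact sum_congr rfl fun i _ => mul_comm _ _

/-- Union bound over the tests containing `i`. -/
lemma welfare_le_noWelfare {n B : ℕ} {q u : Fin n → ℝ} (hq : ∀ i, 0 ≤ q i ∧ q i ≤ 1)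
    (hu : ∀ i, 0 ≤ u i) (T : Fin B → Finset (Fin n)) : welfare q u T ≤ noWelfare q u T := by
  rw [← sum_mul_expectedNegTests]
  exact sum_le_sum fun i _ =>
    mul_le_mul_of_nonneg_left (inNegProb_le_expectedNegTests hq T i) (hu i)

lemma welfare_eq_noWelfare {n B : ℕ} (q u : Fin n → ℝ) {T : Fin B → Finset (Fin n)}
    (hT : Pairwise (Disjoint on T)) : welfare q u T = noWelfare q u T := by
  rw [← sum_mul_expectedNegTests, welfare]
  simp_rw [inNegProb_eq_expectedNegTests q hT]

@[to_additive]
lemma prod_eq_prod_of_card_fiber_eq {ι κ M : Type*} [Fintype κ] [DecidableEq κ]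
    [CommMonoid M] {c : ι → κ} {f : ι → M} (hf : ∀ i i', c i = c i' → f i = f i')
    {s t : Finset ι} (h : ∀ k, #(s.filter fun i => c i = k) = #(t.filter fun i => c i = k)) :
    ∏ i ∈ s, f i = ∏ i ∈ t, f i := by
  rw [← prod_fiberwise s c f, ← prod_fiberwise t c f]
  refine prod_congr rfl fun k _ => ?_
  have hconst : ∃ b, ∀ i, c i = k → f i = b := by
    by_cases hk : ∃ i₀, c i₀ = k
    · obtain ⟨i₀, hi₀⟩ := hk
      exact ⟨f i₀, fun i hi => hf i i₀ (hi.trans hi₀.symm)⟩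
    · exact ⟨1, fun i hi => absurd ⟨i, hi⟩ hk⟩
  obtain ⟨b, hb⟩ := hconst
  rw [prod_eq_pow_card (b := b) fun i hi => hb i (mem_filter.mp hi).2,
    prod_eq_pow_card (b := b) fun i hi => hb i (mem_filter.mp hi).2, h k]

lemma card_eq_of_card_fiber_eq {ι κ : Type*} [Fintype κ] [DecidableEq κ] {c : ι → κ}
    {s t : Finset ι} (h : ∀ k, #(s.filter fun i => c i = k) = #(t.filter fun i => c i = k)) :
    #s = #t := by
  rw [card_eq_sum_ones, card_eq_sum_ones]
  exact sum_eq_sum_of_card_fiber_eq (fun _ _ _ => rfl) h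

lemma exists_pairwise_disjoint_subsets_card_eq {α : Type*} [DecidableEq α] {m a : ℕ}
    {S : Finset α} (hS : m * a ≤ #S) :
    ∃ P : Fin m → Finset α, (∀ j, P j ⊆ S ∧ #(P j) = a) ∧ Pairwise (Disjoint on P) := by
  induction m generalizing S with
  | zero => exact ⟨Fin.elim0, fun j => j.elim0, fun j => j.elim0⟩
  | succ m ih =>
    obtain ⟨t, htS, ht⟩ := exists_subset_card_eq (le_trans (by nlinarith) hS : a ≤ #S)
    have hrest : m * a ≤ #(S \ t) := by
      rw [card_sdiff_of_subset htS, ht]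
      rw [Nat.succ_mul] at hS
      omega
    obtain ⟨P, hPS, hP⟩ := ih hrest
    have hPt : ∀ j, Disjoint t (P j) := fun j => disjoint_of_subset_right (hPS j).1 disjoint_sdiff
    refine ⟨Fin.cons t P, Fin.cases ⟨htS, ht⟩ fun j => ⟨(hPS j).1.trans sdiff_subset, (hPS j).2⟩,
      ?_⟩
    intro j j' hne
    cases j using Fin.cases <;> cases j' using Fin.cases
    · exact absurd rfl hne
    · exact hPt _
    · exact (hPt _).symm
    · exact hP (fun h => hne (congrArg Fin.succ h))

/-- Split each cluster `c⁻¹' {k}` into `B` disjoint pieces of size `#(t ∩ c⁻¹' {k})`; the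
`j`-th copy of `t` collects the `j`-th piece of every cluster. -/
lemma exists_pairwise_disjoint_card_fiber_eq {ι κ : Type*} [Fintype ι] [DecidableEq ι]
    [DecidableEq κ] (c : ι → κ) (t : Finset ι) {B : ℕ}
    (h : ∀ k, B * #(t.filter fun i => c i = k) ≤ #(univ.filter fun i => c i = k)) :
    ∃ T : Fin B → Finset ι, Pairwise (Disjoint on T) ∧
      ∀ j k, #((T j).filter fun i => c i = k) = #(t.filter fun i => c i = k) := by
  choose P hPS hP using fun k => exists_pairwise_disjoint_subsets_card_eq (h k)
  have hc : ∀ k j x, x ∈ P k j → c x = k := fun k j x hx => (mem_filter.mp ((hPS k j).1 hx)).2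
  refine ⟨fun j => univ.filter fun x => x ∈ P (c x) j, fun j j' hne => ?_, fun j k => ?_⟩
  · simp only [onFun, disjoint_left, mem_filter, mem_univ, true_and]
    exact fun x => @disjoint_left.mp (hP (c x) hne) x
  · rw [← (hPS k j).2]
    congr 1
    ext x
    simp only [mem_filter, mem_univ, true_and]
    exact ⟨fun ⟨hx, hxk⟩ => hxk ▸ hx, fun hx => ⟨(hc k j x hx).symm ▸ hx, hc k j x hx⟩⟩

lemma testWelfare_eq_of_card_fiber_eq {n C : ℕ} {q u : Fin n → ℝ} {c : Fin n → Fin C}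
    (hcluster : ∀ i i' : Fin n, c i = c i' → q i = q i' ∧ u i = u i') {s t : Finset (Fin n)}
    (h : ∀ k, #(s.filter fun i => c i = k) = #(t.filter fun i => c i = k)) :
    testWelfare q u s = testWelfare q u t := by
  rw [testWelfare, testWelfare,
    prod_eq_prod_of_card_fiber_eq (fun i i' hii' => (hcluster i i' hii').1) h,
    sum_eq_sum_of_card_fiber_eq (fun i i' hii' => (hcluster i i' hii').2) h]

/-- Clustered populations: if the population is partitioned into clusters with
cluster-wise constant utilities and healthy-probabilities, `tstar` is an optimal single
test, and each cluster is large enough to accommodate `B` copies of its intersection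
with `tstar`, then `B` pairwise disjoint copies of `tstar` (with the same cluster
composition) form an optimal budget-`B` regime, even among overlapping regimes. -/
theorem stmt18 {n C G B : ℕ} (q u : Fin n → ℝ) (c : Fin n → Fin C)
    (hq : ∀ i, 0 ≤ q i ∧ q i ≤ 1) (hu : ∀ i, 0 ≤ u i)
    (hcluster : ∀ i i' : Fin n, c i = c i' → q i = q i' ∧ u i = u i')
    (tstar : Finset (Fin n)) (hsize : tstar.card ≤ G)
    (hopt1 : ∀ t : Finset (Fin n), t.card ≤ G →
      testWelfare q u t ≤ testWelfare q u tstar)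
    (hroom : ∀ k : Fin C,
      B * (tstar.filter fun i => c i = k).card ≤
        (Finset.univ.filter fun i => c i = k).card) :
    ∃ T : Fin B → Finset (Fin n),
      (∀ j k, j ≠ k → Disjoint (T j) (T k)) ∧
      (∀ j, (T j).card ≤ G) ∧
      (∀ j, ∀ k : Fin C,
        ((T j).filter fun i => c i = k).card = (tstar.filter fun i => c i = k).card) ∧
      (∀ T' : Fin B → Finset (Fin n), (∀ j, (T' j).card ≤ G) →
        welfare q u T' ≤ welfare q u T) := by
  obtain ⟨T, hdisj, hfiber⟩ := exists_pairwise_disjoint_card_fiber_eq c tstar hroom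
  refine ⟨T, fun j k => @hdisj j k, fun j => (card_eq_of_card_fiber_eq (hfiber j)).le.trans hsize,
    hfiber, fun T' hT' => ?_⟩
  calc welfare q u T' ≤ noWelfare q u T' := welfare_le_noWelfare hq hu T'
    _ ≤ ∑ _j : Fin B, testWelfare q u tstar := sum_le_sum fun j _ => hopt1 (T' j) (hT' j)
    _ = noWelfare q u T :=
      sum_congr rfl fun j _ => (testWelfare_eq_of_card_fiber_eq hcluster (hfiber j)).symm
    _ = welfare q u T := (welfare_eq_noWelfare q u hdisj).symm
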